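/- arXiv:quant-ph/0604198 — 6 statements merged into one kernel-verified Lean document; each statement's English description precedes it below -/
import Mathlib

section
/- For every real θ and every integer M > 2, the discretely averaged 4×4 matrix Φ := (1/M) · ∑_{l=0}^{M-1} (I₂ ⊗ R_{2πl/M}) · ψ₀ψ₀* · (I₂ ⊗ R_{2πl/M})* commutes with I₂ ⊗ R_β for every real β; that is, discrete rotational averaging yields invariance under all continuous rotations. -/
open Matrix Kronecker

/-- The rotation matrix through angle `β`, as a 2×2 complex matrix. -/
noncomputable def R (β : ℝ) : Matrix (Fin 2) (Fin 2) ℂ :=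
  !![(Real.cos β : ℂ), -(Real.sin β : ℂ); (Real.sin β : ℂ), (Real.cos β : ℂ)]

/-- Kronecker (tensor) product of two vectors in ℂ². -/
def vecKron (u v : Fin 2 → ℂ) : Fin 2 × Fin 2 → ℂ := fun p => u p.1 * v p.2

/-- The state `φ₊(θ) = (cos(θ/2), sin(θ/2))` in ℂ². -/
noncomputable def phiP (θ : ℝ) : Fin 2 → ℂ :=
  ![(Real.cos (θ / 2) : ℂ), (Real.sin (θ / 2) : ℂ)]

/-- The state `φ₋(θ) = (cos(θ/2), -sin(θ/2))` in ℂ². -/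
noncomputable def phiM (θ : ℝ) : Fin 2 → ℂ :=
  ![(Real.cos (θ / 2) : ℂ), -(Real.sin (θ / 2) : ℂ)]

/-- The joint state `ψ₀ = (1/√2)(e₀ ⊗ φ₊(θ) + e₁ ⊗ φ₋(θ))` in ℂ⁴. -/
noncomputable def psi0 (θ : ℝ) : Fin 2 × Fin 2 → ℂ :=
  ((Real.sqrt 2 : ℂ))⁻¹ • (vecKron ![1, 0] (phiP θ) + vecKron ![0, 1] (phiM θ))

/-- The rotationally averaged matrix. -/
noncomputable def mA (θ : ℝ) : Matrix (Fin 2 × Fin 2) (Fin 2 × Fin 2) ℂ :=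
  ((Real.sqrt 2 : ℂ))⁻¹ ^ 2 •
    ((1 : Matrix (Fin 2) (Fin 2) ℂ) ⊗ₖ ((((Real.cos (θ/2):ℂ)^2 + (Real.sin (θ/2):ℂ)^2)/2) • (1 : Matrix (Fin 2) (Fin 2) ℂ))
      + !![(0:ℂ),1;0,0] ⊗ₖ
          !![((Real.cos (θ/2):ℂ)^2 - (Real.sin (θ/2):ℂ)^2)/2, -((Real.cos (θ/2):ℂ)*(Real.sin (θ/2):ℂ));
             (Real.cos (θ/2):ℂ)*(Real.sin (θ/2):ℂ), ((Real.cos (θ/2):ℂ)^2 - (Real.sin (θ/2):ℂ)^2)/2]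
      + !![(0:ℂ),0;1,0] ⊗ₖ
          !![((Real.cos (θ/2):ℂ)^2 - (Real.sin (θ/2):ℂ)^2)/2, (Real.cos (θ/2):ℂ)*(Real.sin (θ/2):ℂ);
             -((Real.cos (θ/2):ℂ)*(Real.sin (θ/2):ℂ)), ((Real.cos (θ/2):ℂ)^2 - (Real.sin (θ/2):ℂ)^2)/2])

/-- Coefficient matrix of `cos (2α)`. -/
noncomputable def mB (θ : ℝ) : Matrix (Fin 2 × Fin 2) (Fin 2 × Fin 2) ℂ :=
  ((Real.sqrt 2 : ℂ))⁻¹ ^ 2 •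
    (!![(1:ℂ),0;0,0] ⊗ₖ
        !![((Real.cos (θ/2):ℂ)^2 - (Real.sin (θ/2):ℂ)^2)/2, (Real.cos (θ/2):ℂ)*(Real.sin (θ/2):ℂ);
           (Real.cos (θ/2):ℂ)*(Real.sin (θ/2):ℂ), -(((Real.cos (θ/2):ℂ)^2 - (Real.sin (θ/2):ℂ)^2)/2)]
      + !![(0:ℂ),1;1,0] ⊗ₖ !![(((Real.cos (θ/2):ℂ)^2 + (Real.sin (θ/2):ℂ)^2)/2),0;0,-(((Real.cos (θ/2):ℂ)^2 + (Real.sin (θ/2):ℂ)^2)/2)]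
      + !![(0:ℂ),0;0,1] ⊗ₖ
        !![((Real.cos (θ/2):ℂ)^2 - (Real.sin (θ/2):ℂ)^2)/2, -((Real.cos (θ/2):ℂ)*(Real.sin (θ/2):ℂ));
           -((Real.cos (θ/2):ℂ)*(Real.sin (θ/2):ℂ)), -(((Real.cos (θ/2):ℂ)^2 - (Real.sin (θ/2):ℂ)^2)/2)])

/-- Coefficient matrix of `sin (2α)`. -/
noncomputable def mC (θ : ℝ) : Matrix (Fin 2 × Fin 2) (Fin 2 × Fin 2) ℂ :=
  ((Real.sqrt 2 : ℂ))⁻¹ ^ 2 •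
    (!![(1:ℂ),0;0,0] ⊗ₖ
        !![-((Real.cos (θ/2):ℂ)*(Real.sin (θ/2):ℂ)), ((Real.cos (θ/2):ℂ)^2 - (Real.sin (θ/2):ℂ)^2)/2;
           ((Real.cos (θ/2):ℂ)^2 - (Real.sin (θ/2):ℂ)^2)/2, (Real.cos (θ/2):ℂ)*(Real.sin (θ/2):ℂ)]
      + !![(0:ℂ),1;1,0] ⊗ₖ !![(0:ℂ),(((Real.cos (θ/2):ℂ)^2 + (Real.sin (θ/2):ℂ)^2)/2);(((Real.cos (θ/2):ℂ)^2 + (Real.sin (θ/2):ℂ)^2)/2),0]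
      + !![(0:ℂ),0;0,1] ⊗ₖ
        !![(Real.cos (θ/2):ℂ)*(Real.sin (θ/2):ℂ), ((Real.cos (θ/2):ℂ)^2 - (Real.sin (θ/2):ℂ)^2)/2;
           ((Real.cos (θ/2):ℂ)^2 - (Real.sin (θ/2):ℂ)^2)/2, -((Real.cos (θ/2):ℂ)*(Real.sin (θ/2):ℂ))])

set_option maxHeartbeats 4000000 in
lemma conj_decomp (θ α : ℝ) :
    ((1 : Matrix (Fin 2) (Fin 2) ℂ) ⊗ₖ R α) * Matrix.vecMulVec (psi0 θ) (star (psi0 θ)) *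
        ((1 : Matrix (Fin 2) (Fin 2) ℂ) ⊗ₖ R α)ᴴ
      = mA θ + ((Real.cos α ^ 2 - Real.sin α ^ 2 : ℝ) : ℂ) • mB θ
          + ((2 * Real.sin α * Real.cos α : ℝ) : ℂ) • mC θ := by
  have pyth : (Real.sin α : ℂ)^2 + (Real.cos α : ℂ)^2 = 1 := by
    exact_mod_cast congrArg (Complex.ofReal) (Real.sin_sq_add_cos_sq α)
  ext ⟨i, p⟩ ⟨j, q⟩
  fin_cases i <;> fin_cases p <;> fin_cases j <;> fin_cases q <;>
    simp [R, psi0, vecKron, phiP, phiM, mA, mB, mC, Matrix.mul_apply,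
      Matrix.vecMulVec_apply, Fintype.sum_prod_type, Fin.sum_univ_two,
      Matrix.one_apply, Matrix.conjTranspose_apply, Complex.conj_ofReal,
      -Complex.ofReal_cos, -Complex.ofReal_sin] <;>
    first
      | ring1
      | linear_combination (((Real.sqrt 2 : ℂ))⁻¹ ^ 2 *
          (((Real.cos (θ/2):ℂ)^2 + (Real.sin (θ/2):ℂ)^2)/2)) * pyth
      | linear_combination (((Real.sqrt 2 : ℂ))⁻¹ ^ 2 *
          (((Real.cos (θ/2):ℂ)^2 - (Real.sin (θ/2):ℂ)^2)/2)) * pyth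
      | linear_combination (((Real.sqrt 2 : ℂ))⁻¹ ^ 2 *
          ((Real.cos (θ/2):ℂ) * (Real.sin (θ/2):ℂ))) * pyth
      | linear_combination (-(((Real.sqrt 2 : ℂ))⁻¹ ^ 2 *
          ((Real.cos (θ/2):ℂ) * (Real.sin (θ/2):ℂ)))) * pyth

set_option maxHeartbeats 4000000 in
theorem averaged_state_commutes_with_rotations (θ : ℝ) (M : ℕ) (hM : 2 < M) :
    ∀ β : ℝ,
      ((1 / (M : ℂ)) • ∑ l ∈ Finset.range M,
          ((1 : Matrix (Fin 2) (Fin 2) ℂ) ⊗ₖ R (2 * Real.pi * (l : ℝ) / (M : ℝ))) *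
            Matrix.vecMulVec (psi0 θ) (star (psi0 θ)) *
              ((1 : Matrix (Fin 2) (Fin 2) ℂ) ⊗ₖ R (2 * Real.pi * (l : ℝ) / (M : ℝ)))ᴴ) *
        ((1 : Matrix (Fin 2) (Fin 2) ℂ) ⊗ₖ R β)
      = ((1 : Matrix (Fin 2) (Fin 2) ℂ) ⊗ₖ R β) *
        ((1 / (M : ℂ)) • ∑ l ∈ Finset.range M,
          ((1 : Matrix (Fin 2) (Fin 2) ℂ) ⊗ₖ R (2 * Real.pi * (l : ℝ) / (M : ℝ))) *
            Matrix.vecMulVec (psi0 θ) (star (psi0 θ)) *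
              ((1 : Matrix (Fin 2) (Fin 2) ℂ) ⊗ₖ R (2 * Real.pi * (l : ℝ) / (M : ℝ)))ᴴ) := by
  intro β
  have hM0 : (M : ℝ) ≠ 0 := by positivity
  have hMC : (M : ℂ) ≠ 0 := by exact_mod_cast Nat.cast_ne_zero.mpr (by omega)
  set a : ℕ → ℝ := fun l => 2 * Real.pi * (l : ℝ) / (M : ℝ) with ha
  set ζ : ℂ := Complex.exp ((4 * Real.pi / M : ℝ) * Complex.I) with hζ
  have hζM : ζ ^ M = 1 := by
    rw [hζ, ← Complex.exp_nat_mul]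
    have harg : (M : ℂ) * ((4 * Real.pi / M : ℝ) * Complex.I)
        = (2:ℕ) * (2 * (Real.pi : ℂ) * Complex.I) := by
      push_cast
      field_simp
      ring
    rw [harg, Complex.exp_nat_mul, Complex.exp_two_pi_mul_I]
    norm_num
  have hζ1 : ζ ≠ 1 := by
    intro h
    rw [hζ, Complex.exp_eq_one_iff] at h
    obtain ⟨n, hn⟩ := h
    have hre : (4 * Real.pi / M : ℝ) = n * (2 * Real.pi) := by
      have := congrArg Complex.im hn
      simpa using this
    have e1 : 4 * Real.pi / M * M = (n:ℝ) * (2 * Real.pi) * M := by rw [hre]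
    rw [div_mul_cancel₀ _ hM0] at e1
    have h2 : (n:ℝ) * M = 2 := by
      have hπ : (0:ℝ) < Real.pi := Real.pi_pos
      nlinarith [e1]
    have h2' : n * (M : ℤ) = 2 := by exact_mod_cast h2
    have hdvd : (M : ℤ) ∣ 2 := ⟨n, by linarith [h2']⟩
    have := Int.le_of_dvd (by norm_num) hdvd
    omega
  have hgeom : ∑ l ∈ Finset.range M, ζ ^ l = 0 := by
    rw [geom_sum_eq hζ1, hζM]; simp
  have hterm : ∀ l : ℕ, ((Real.cos (a l) ^ 2 - Real.sin (a l) ^ 2 : ℝ) : ℂ)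
      + ((2 * Real.sin (a l) * Real.cos (a l) : ℝ) : ℂ) * Complex.I = ζ ^ l := by
    intro l
    have h1 : Complex.exp ((a l : ℂ) * Complex.I)
        = (Real.cos (a l) : ℂ) + (Real.sin (a l) : ℂ) * Complex.I := by
      rw [Complex.exp_mul_I, Complex.ofReal_cos, Complex.ofReal_sin]
    have h2 : ζ ^ l = Complex.exp ((a l : ℂ) * Complex.I) ^ 2 := by
      rw [hζ, ← Complex.exp_nat_mul,
        show Complex.exp ((a l : ℂ) * Complex.I) ^ 2
          = Complex.exp ((2:ℕ) * ((a l : ℂ) * Complex.I)) by rw [Complex.exp_nat_mul]]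
      congr 1
      rw [ha]
      push_cast
      ring
    rw [h2, h1]
    push_cast [-Complex.ofReal_cos, -Complex.ofReal_sin]
    linear_combination (-(Real.sin (a l) : ℂ)^2) * Complex.I_sq
  have hsum2 : ((∑ l ∈ Finset.range M, (Real.cos (a l) ^ 2 - Real.sin (a l) ^ 2) : ℝ) : ℂ)
      + ((∑ l ∈ Finset.range M, (2 * Real.sin (a l) * Real.cos (a l)) : ℝ) : ℂ) * Complex.I
      = 0 := by
    rw [Complex.ofReal_sum, Complex.ofReal_sum, Finset.sum_mul, ← Finset.sum_add_distrib,
      Finset.sum_congr rfl (fun l _ => hterm l), hgeom]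
  have hX1 : (∑ l ∈ Finset.range M, (Real.cos (a l) ^ 2 - Real.sin (a l) ^ 2) : ℝ) = 0 := by
    have h := congrArg Complex.re hsum2
    simp only [Complex.add_re, Complex.mul_re, Complex.ofReal_re, Complex.ofReal_im,
      Complex.I_re, Complex.I_im, Complex.zero_re] at h
    norm_num at h
    rw [Finset.sum_sub_distrib]
    exact h
  have hX2 : (∑ l ∈ Finset.range M, (2 * Real.sin (a l) * Real.cos (a l)) : ℝ) = 0 := by
    have h := congrArg Complex.im hsum2
    simp only [Complex.add_im, Complex.mul_im, Complex.ofReal_re, Complex.ofReal_im,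
      Complex.I_re, Complex.I_im, Complex.zero_im] at h
    norm_num at h
    exact h
  have hS : ∑ l ∈ Finset.range M,
      ((1 : Matrix (Fin 2) (Fin 2) ℂ) ⊗ₖ R (2 * Real.pi * (l : ℝ) / (M : ℝ))) *
        Matrix.vecMulVec (psi0 θ) (star (psi0 θ)) *
          ((1 : Matrix (Fin 2) (Fin 2) ℂ) ⊗ₖ R (2 * Real.pi * (l : ℝ) / (M : ℝ)))ᴴ
      = (M : ℂ) • mA θ := by
    calc ∑ l ∈ Finset.range M,
        ((1 : Matrix (Fin 2) (Fin 2) ℂ) ⊗ₖ R (2 * Real.pi * (l : ℝ) / (M : ℝ))) *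
          Matrix.vecMulVec (psi0 θ) (star (psi0 θ)) *
            ((1 : Matrix (Fin 2) (Fin 2) ℂ) ⊗ₖ R (2 * Real.pi * (l : ℝ) / (M : ℝ)))ᴴ
        = ∑ l ∈ Finset.range M, (mA θ
            + ((Real.cos (a l) ^ 2 - Real.sin (a l) ^ 2 : ℝ) : ℂ) • mB θ
            + ((2 * Real.sin (a l) * Real.cos (a l) : ℝ) : ℂ) • mC θ) :=
          Finset.sum_congr rfl (fun l _ => conj_decomp θ (a l))
      _ = (M : ℂ) • mA θ := by
          rw [Finset.sum_add_distrib, Finset.sum_add_distrib, ← Finset.sum_smul,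
            ← Finset.sum_smul, ← Complex.ofReal_sum, ← Complex.ofReal_sum, hX1, hX2]
          simp only [Complex.ofReal_zero, zero_smul, add_zero, Finset.sum_const,
            Finset.card_range]
          rw [← Nat.cast_smul_eq_nsmul ℂ]
  rw [Matrix.smul_mul, Matrix.mul_smul, hS]
  congr 1
  rw [Matrix.smul_mul, Matrix.mul_smul]
  congr 1
  ext ⟨i, p⟩ ⟨j, q⟩
  fin_cases i <;> fin_cases p <;> fin_cases j <;> fin_cases q <;>
    simp [R, mA, Matrix.mul_apply, Fintype.sum_prod_type, Fin.sum_univ_two,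
      Matrix.one_apply] <;> ring
end

section
/- For every real θ and every integer M > 2, the discretely averaged matrix Φ := (1/M) · ∑_{l=0}^{M-1} (I₂ ⊗ R_{2πl/M}) · ψ₀ψ₀* · (I₂ ⊗ R_{2πl/M})* has the closed form Φ = (1/4)·(I₄ + E₀₁ ⊗ R_θ + E₁₀ ⊗ R_{−θ}), where E₀₁ and E₁₀ are the 2×2 matrix units with a single 1 in position (0,1) and (1,0) respectively, and I₄ is the 4×4 identity matrix. In particular Φ is independent of M. -/
open Matrix Kronecker

/-- The matrix unit `E₀₁` with a single 1 in position (0,1). -/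
def E01 : Matrix (Fin 2) (Fin 2) ℂ := !![0, 1; 0, 0]

/-- The matrix unit `E₁₀` with a single 1 in position (1,0). -/
def E10 : Matrix (Fin 2) (Fin 2) ℂ := !![0, 0; 1, 0]

/- ### Auxiliary material -/

private def Jm : Matrix (Fin 2) (Fin 2) ℂ := !![0, -1; 1, 0]

private lemma exp_sum_zero (M : ℕ) (hM : 2 < M) :
    ∑ l ∈ Finset.range M, Complex.exp ((2 * (2 * Real.pi * (l:ℝ) / M) : ℝ) * Complex.I) = 0 := by
  set ζ : ℂ := Complex.exp (2 * Real.pi * Complex.I / M) with hζ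
  have hprim : IsPrimitiveRoot ζ M := Complex.isPrimitiveRoot_exp M (by omega)
  have hne : ζ ^ 2 ≠ 1 := hprim.pow_ne_one_of_pos_of_lt (by norm_num) hM
  have hterm : ∀ l ∈ Finset.range M,
      Complex.exp ((2 * (2 * Real.pi * (l:ℝ) / M) : ℝ) * Complex.I) = (ζ ^ 2) ^ l := by
    intro l _
    rw [hζ, ← Complex.exp_nat_mul, ← Complex.exp_nat_mul]
    congr 1
    have hM0 : (M : ℂ) ≠ 0 := by exact_mod_cast (by omega : M ≠ 0)
    push_cast
    field_simp
  rw [Finset.sum_congr rfl hterm, geom_sum_eq hne]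
  have : (ζ ^ 2) ^ M = 1 := by
    rw [← pow_mul, mul_comm, pow_mul, hprim.pow_eq_one, one_pow]
  rw [this]
  simp

private lemma cos2_sum (M : ℕ) (hM : 2 < M) :
    ∑ l ∈ Finset.range M, Real.cos (2 * (2 * Real.pi * (l:ℝ) / M)) = 0 := by
  have h := congrArg Complex.re (exp_sum_zero M hM)
  rw [Complex.re_sum] at h
  simp only [Complex.exp_ofReal_mul_I_re] at h
  simpa using h

private lemma sin2_sum (M : ℕ) (hM : 2 < M) :
    ∑ l ∈ Finset.range M, Real.sin (2 * (2 * Real.pi * (l:ℝ) / M)) = 0 := by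
  have h := congrArg Complex.im (exp_sum_zero M hM)
  rw [Complex.im_sum] at h
  simp only [Complex.exp_ofReal_mul_I_im] at h
  simpa using h

private lemma cc_sum (M : ℕ) (hM : 2 < M) :
    ∑ l ∈ Finset.range M, (Real.cos (2 * Real.pi * (l:ℝ) / M) : ℂ)^2 = (M:ℂ)/2 := by
  have h : ∑ l ∈ Finset.range M, Real.cos (2 * Real.pi * (l:ℝ) / M)^2 = (M:ℝ)/2 := by
    have e : ∀ l ∈ Finset.range M, Real.cos (2 * Real.pi * (l:ℝ) / M)^2
        = 1/2 + Real.cos (2*(2 * Real.pi * (l:ℝ) / M))/2 := fun l _ => Real.cos_sq _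
    rw [Finset.sum_congr rfl e, Finset.sum_add_distrib, ← Finset.sum_div, ← Finset.sum_div,
      cos2_sum M hM]
    simp
  calc ∑ l ∈ Finset.range M, (Real.cos (2 * Real.pi * (l:ℝ) / M) : ℂ)^2
      = ((∑ l ∈ Finset.range M, Real.cos (2 * Real.pi * (l:ℝ) / M)^2 : ℝ) : ℂ) := by
        rw [Complex.ofReal_sum]; norm_num
    _ = (M:ℂ)/2 := by rw [h]; push_cast; ring

private lemma ss_sum (M : ℕ) (hM : 2 < M) :
    ∑ l ∈ Finset.range M, (Real.sin (2 * Real.pi * (l:ℝ) / M) : ℂ)^2 = (M:ℂ)/2 := by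
  have e : ∀ l ∈ Finset.range M, (Real.sin (2 * Real.pi * (l:ℝ) / M) : ℂ)^2
      = 1 - (Real.cos (2 * Real.pi * (l:ℝ) / M) : ℂ)^2 := by
    intro l _
    have h2 := Real.sin_sq_add_cos_sq (2 * Real.pi * (l:ℝ) / M)
    have h3 : Real.sin (2 * Real.pi * (l:ℝ) / M)^2 = 1 - Real.cos (2 * Real.pi * (l:ℝ) / M)^2 := by
      linarith
    calc (Real.sin (2 * Real.pi * (l:ℝ) / M) : ℂ)^2
        = ((Real.sin (2 * Real.pi * (l:ℝ) / M)^2 : ℝ) : ℂ) := by norm_num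
      _ = ((1 - Real.cos (2 * Real.pi * (l:ℝ) / M)^2 : ℝ) : ℂ) := by rw [h3]
      _ = 1 - (Real.cos (2 * Real.pi * (l:ℝ) / M) : ℂ)^2 := by push_cast; norm_num
  rw [Finset.sum_congr rfl e, Finset.sum_sub_distrib, cc_sum M hM]
  simp
  ring

private lemma sc_sum (M : ℕ) (hM : 2 < M) :
    ∑ l ∈ Finset.range M,
      (Real.sin (2 * Real.pi * (l:ℝ) / M) : ℂ) * (Real.cos (2 * Real.pi * (l:ℝ) / M) : ℂ) = 0 := by
  have h : ∑ l ∈ Finset.range M,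
      Real.sin (2 * Real.pi * (l:ℝ) / M) * Real.cos (2 * Real.pi * (l:ℝ) / M) = 0 := by
    have e : ∀ l ∈ Finset.range M,
        Real.sin (2 * Real.pi * (l:ℝ) / M) * Real.cos (2 * Real.pi * (l:ℝ) / M)
        = Real.sin (2*(2 * Real.pi * (l:ℝ) / M))/2 := by
      intro l _
      rw [Real.sin_two_mul]; ring
    rw [Finset.sum_congr rfl e, ← Finset.sum_div, sin2_sum M hM]
    simp
  calc ∑ l ∈ Finset.range M,
      (Real.sin (2 * Real.pi * (l:ℝ) / M):ℂ) * (Real.cos (2 * Real.pi * (l:ℝ) / M):ℂ)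
      = ((∑ l ∈ Finset.range M,
          Real.sin (2 * Real.pi * (l:ℝ) / M) * Real.cos (2 * Real.pi * (l:ℝ) / M) : ℝ) : ℂ) := by
        rw [Complex.ofReal_sum]; norm_num
    _ = 0 := by rw [h]; norm_num

private lemma R_decomp (β : ℝ) :
    R β = (Real.cos β : ℂ) • (1 : Matrix (Fin 2) (Fin 2) ℂ) + (Real.sin β : ℂ) • Jm := by
  ext i j
  fin_cases i <;> fin_cases j <;> simp [R, Jm, Matrix.one_apply]

private lemma kron_decomp (β : ℝ) :
    (1 : Matrix (Fin 2) (Fin 2) ℂ) ⊗ₖ R β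
      = (Real.cos β : ℂ) • (1 : Matrix (Fin 2 × Fin 2) (Fin 2 × Fin 2) ℂ)
        + (Real.sin β : ℂ) • ((1 : Matrix (Fin 2) (Fin 2) ℂ) ⊗ₖ Jm) := by
  rw [R_decomp, Matrix.kronecker_add, Matrix.kronecker_smul, Matrix.kronecker_smul,
    Matrix.one_kronecker_one]

private lemma K_conjTranspose :
    ((1 : Matrix (Fin 2) (Fin 2) ℂ) ⊗ₖ Jm)ᴴ = -((1 : Matrix (Fin 2) (Fin 2) ℂ) ⊗ₖ Jm) := by
  ext ⟨i,j⟩ ⟨k,l⟩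
  fin_cases i <;> fin_cases j <;> fin_cases k <;> fin_cases l <;>
    simp [Jm, Matrix.kroneckerMap_apply, Matrix.one_apply]

private lemma summand_eq (β : ℝ) (P : Matrix (Fin 2 × Fin 2) (Fin 2 × Fin 2) ℂ) :
    ((1 : Matrix (Fin 2) (Fin 2) ℂ) ⊗ₖ R β) * P * ((1 : Matrix (Fin 2) (Fin 2) ℂ) ⊗ₖ R β)ᴴ
      = (Real.cos β : ℂ)^2 • P
        + ((Real.sin β : ℂ) * (Real.cos β : ℂ)) •
            (((1 : Matrix (Fin 2) (Fin 2) ℂ) ⊗ₖ Jm) * P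
              - P * ((1 : Matrix (Fin 2) (Fin 2) ℂ) ⊗ₖ Jm))
        - (Real.sin β : ℂ)^2 •
            (((1 : Matrix (Fin 2) (Fin 2) ℂ) ⊗ₖ Jm) * P
              * ((1 : Matrix (Fin 2) (Fin 2) ℂ) ⊗ₖ Jm)) := by
  rw [kron_decomp]
  rw [Matrix.conjTranspose_add, Matrix.conjTranspose_smul, Matrix.conjTranspose_smul,
    Matrix.conjTranspose_one, K_conjTranspose]
  simp only [Complex.star_def, Complex.conj_ofReal]
  simp only [Matrix.add_mul, Matrix.mul_add, Matrix.smul_mul, Matrix.mul_smul, one_mul, mul_one,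
    smul_smul, smul_neg, Matrix.mul_neg, smul_sub, smul_add, Matrix.mul_assoc]
  module

private lemma star_psi0 (θ : ℝ) : star (psi0 θ) = psi0 θ := by
  funext p
  fin_cases p <;>
    simp [psi0, vecKron, phiP, phiM, Complex.star_def, _root_.map_mul, map_add, map_inv₀,
      ← Complex.cos_conj, ← Complex.sin_conj, map_div₀, Complex.conj_ofReal, map_ofNat]

set_option maxHeartbeats 1000000 in
private lemma final_entry (θ : ℝ) :
    ((1:ℂ)/2) • (Matrix.vecMulVec (psi0 θ) (star (psi0 θ))
        - ((1 : Matrix (Fin 2) (Fin 2) ℂ) ⊗ₖ Jm) * Matrix.vecMulVec (psi0 θ) (star (psi0 θ)) *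
          ((1 : Matrix (Fin 2) (Fin 2) ℂ) ⊗ₖ Jm))
      = ((1 : ℂ) / 4) •
          ((1 : Matrix (Fin 2 × Fin 2) (Fin 2 × Fin 2) ℂ) + E01 ⊗ₖ R θ + E10 ⊗ₖ R (-θ)) := by
  have hrr2 : ((Real.sqrt 2 : ℂ))⁻¹ ^ 2 = 1/2 := by
    rw [sq, ← mul_inv]
    norm_cast
    rw [Real.mul_self_sqrt (by norm_num)]
    norm_num
  have h1 : Complex.cos (θ/2 : ℝ)^2 + Complex.sin (θ/2 : ℝ)^2 = 1 := by
    exact_mod_cast congrArg (fun x:ℝ => (x:ℂ)) (Real.cos_sq_add_sin_sq (θ/2))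
  have hc2 : (Real.cos θ : ℂ) = (Real.cos (θ/2):ℂ)^2 - (Real.sin (θ/2):ℂ)^2 := by
    have h := Real.cos_two_mul' (x := θ/2)
    rw [show 2*(θ/2) = θ by ring] at h
    exact_mod_cast congrArg (fun x:ℝ => (x:ℂ)) h
  have hs2 : (Real.sin θ : ℂ) = 2 * (Real.sin (θ/2):ℂ) * (Real.cos (θ/2):ℂ) := by
    have h := Real.sin_two_mul (θ/2)
    rw [show 2*(θ/2) = θ by ring] at h
    exact_mod_cast congrArg (fun x:ℝ => (x:ℂ)) h
  have hone : Complex.cos ((θ:ℂ)*(1/2))^2 + Complex.sin ((θ:ℂ)*(1/2))^2 = 1 :=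
    Complex.cos_sq_add_sin_sq _
  have hcosA : Complex.cos (θ:ℂ) = Complex.cos ((θ:ℂ)*(1/2))^2 - Complex.sin ((θ:ℂ)*(1/2))^2 := by
    have h := Complex.cos_two_mul' (x := (θ:ℂ)*(1/2))
    rw [show 2*((θ:ℂ)*(1/2)) = (θ:ℂ) by ring] at h
    exact h
  have hsinA : Complex.sin (θ:ℂ) = 2 * Complex.sin ((θ:ℂ)*(1/2)) * Complex.cos ((θ:ℂ)*(1/2)) := by
    have h := Complex.sin_two_mul ((θ:ℂ)*(1/2))
    rw [show 2*((θ:ℂ)*(1/2)) = (θ:ℂ) by ring] at h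
    exact h
  rw [star_psi0]
  ext ⟨i,j⟩ ⟨k,l⟩
  fin_cases i <;> fin_cases j <;> fin_cases k <;> fin_cases l <;>
    · simp only [Matrix.smul_apply, Matrix.sub_apply, Matrix.add_apply, Matrix.mul_apply,
        Fintype.sum_prod_type, Fin.sum_univ_two, Matrix.vecMulVec_apply,
        Matrix.kroneckerMap_apply, Matrix.one_apply, psi0, vecKron, phiP, phiM, Jm, E01, E10, R,
        Pi.smul_apply, Pi.add_apply, smul_eq_mul,
        Matrix.cons_val', Matrix.cons_val_zero, Matrix.cons_val_one,
        Matrix.head_cons, Matrix.head_fin_const, Matrix.cons_val_fin_one,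
        Real.cos_neg, Real.sin_neg]
      push_cast
      norm_num [Prod.ext_iff]
      try ring_nf
      try simp only [hrr2]
      try ring_nf
      try simp only [hcosA, hsinA]
      try ring
      try linear_combination hone/4
      try linear_combination -(hone/4)
      try linear_combination hone/2
      try linear_combination -(hone/2)
      try linear_combination hone

theorem averaged_state_closed_form (θ : ℝ) (M : ℕ) (hM : 2 < M) :
    (1 / (M : ℂ)) • ∑ l ∈ Finset.range M,
        ((1 : Matrix (Fin 2) (Fin 2) ℂ) ⊗ₖ R (2 * Real.pi * (l : ℝ) / (M : ℝ))) *
          Matrix.vecMulVec (psi0 θ) (star (psi0 θ)) *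
            ((1 : Matrix (Fin 2) (Fin 2) ℂ) ⊗ₖ R (2 * Real.pi * (l : ℝ) / (M : ℝ)))ᴴ
      = ((1 : ℂ) / 4) •
          ((1 : Matrix (Fin 2 × Fin 2) (Fin 2 × Fin 2) ℂ) + E01 ⊗ₖ R θ + E10 ⊗ₖ R (-θ)) := by
  have hM0 : (M : ℂ) ≠ 0 := by exact_mod_cast (by omega : M ≠ 0)
  have hstep : ∀ l ∈ Finset.range M,
      ((1 : Matrix (Fin 2) (Fin 2) ℂ) ⊗ₖ R (2 * Real.pi * (l : ℝ) / (M : ℝ))) *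
          Matrix.vecMulVec (psi0 θ) (star (psi0 θ)) *
            ((1 : Matrix (Fin 2) (Fin 2) ℂ) ⊗ₖ R (2 * Real.pi * (l : ℝ) / (M : ℝ)))ᴴ
        = (Real.cos (2 * Real.pi * (l : ℝ) / (M : ℝ)) : ℂ)^2 •
              Matrix.vecMulVec (psi0 θ) (star (psi0 θ))
            + ((Real.sin (2 * Real.pi * (l : ℝ) / (M : ℝ)) : ℂ) *
                (Real.cos (2 * Real.pi * (l : ℝ) / (M : ℝ)) : ℂ)) •
                (((1 : Matrix (Fin 2) (Fin 2) ℂ) ⊗ₖ Jm) * Matrix.vecMulVec (psi0 θ) (star (psi0 θ))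
                  - Matrix.vecMulVec (psi0 θ) (star (psi0 θ)) * ((1 : Matrix (Fin 2) (Fin 2) ℂ) ⊗ₖ Jm))
            - (Real.sin (2 * Real.pi * (l : ℝ) / (M : ℝ)) : ℂ)^2 •
                (((1 : Matrix (Fin 2) (Fin 2) ℂ) ⊗ₖ Jm) * Matrix.vecMulVec (psi0 θ) (star (psi0 θ))
                  * ((1 : Matrix (Fin 2) (Fin 2) ℂ) ⊗ₖ Jm)) :=
    fun l _ => summand_eq _ _
  rw [Finset.sum_congr rfl hstep, Finset.sum_sub_distrib, Finset.sum_add_distrib,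
    ← Finset.sum_smul, ← Finset.sum_smul, ← Finset.sum_smul,
    cc_sum M hM, ss_sum M hM, sc_sum M hM, zero_smul, add_zero, smul_sub, smul_smul, smul_smul,
    show 1/(M:ℂ) * ((M:ℂ)/2) = 1/2 by field_simp, ← smul_sub]
  exact final_entry θ
end

section
/- Let M ≥ 2 be an integer, θ a real number, and let (U_j)_{j∈S}, (V_j)_{j∈S} be finite families of 2×2 complex matrices with U_j·J = J·U_j and V_j·J = −J·V_j for all j. Then the discretely symmetrized, filtered density operator simplifies as follows: (1/M) · ∑_{j∈S} ∑_{l=0}^{M-1} (I₂ ⊗ (F₀·R_{−lπ/M}·(U_j+V_j)·R_{lπ/M})) · ψ₀ψ₀* · (I₂ ⊗ (F₀·R_{−lπ/M}·(U_j+V_j)·R_{lπ/M}))* = (I₂ ⊗ F₀) · [ ∑_{j∈S} (I₂⊗U_j)·ψ₀ψ₀*·(I₂⊗U_j)* + (I₂⊗V_j)·Φ·(I₂⊗V_j)* ] · (I₂ ⊗ F₀)*, where Φ := (1/M)·∑_{l=0}^{M-1} (I₂ ⊗ R_{2πl/M}) · ψ₀ψ₀* · (I₂ ⊗ R_{2πl/M})*.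 -/
open Matrix Kronecker

/-- The matrix `J = [[0,-1],[1,0]]`, the generator of rotations. -/
def J : Matrix (Fin 2) (Fin 2) ℂ := !![0, -1; 1, 0]

/-- The rank-one projector `ψ₀ψ₀*` as a 4×4 matrix. -/
noncomputable def P0 (θ : ℝ) : Matrix (Fin 2 × Fin 2) (Fin 2 × Fin 2) ℂ :=
  Matrix.vecMulVec (psi0 θ) (star (psi0 θ))

/-- The filtration operator `F₀ = diag(sin(θ/2), cos(θ/2))`. -/
noncomputable def F0 (θ : ℝ) : Matrix (Fin 2) (Fin 2) ℂ :=
  !![(Real.sin (θ / 2) : ℂ), 0; 0, (Real.cos (θ / 2) : ℂ)]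

/-- The discretely averaged state
`Φ = (1/M) ∑_{l<M} (I₂ ⊗ R_{2πl/M}) ψ₀ψ₀* (I₂ ⊗ R_{2πl/M})*`. -/
noncomputable def Phi (θ : ℝ) (M : ℕ) : Matrix (Fin 2 × Fin 2) (Fin 2 × Fin 2) ℂ :=
  (1 / (M : ℂ)) • ∑ l ∈ Finset.range M,
    ((1 : Matrix (Fin 2) (Fin 2) ℂ) ⊗ₖ R (2 * Real.pi * (l : ℝ) / (M : ℝ))) * P0 θ *
      ((1 : Matrix (Fin 2) (Fin 2) ℂ) ⊗ₖ R (2 * Real.pi * (l : ℝ) / (M : ℝ)))ᴴ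

/-! Conjugation by `R_{lπ/M}` fixes each `U_j`, which commutes with `J` and hence with every
rotation, and turns `V_j` into `V_j R_{2πl/M}`; so the `l`-th filtered operator is
`F₀U_j + F₀V_j R_{2πl/M}`. Expanding the quadratic expression, the cross terms carry
`∑_l R_{2πl/M}`, a sum over the `M`-th roots of unity, which vanishes for `M ≥ 2`. -/

lemma R_eq_cos_smul_one_add_sin_smul_J (β : ℝ) :
    R β = (Real.cos β : ℂ) • 1 + (Real.sin β : ℂ) • _root_.J := by
  ext i j; fin_cases i <;> fin_cases j <;> simp [R, _root_.J]

lemma R_zero : R 0 = 1 := by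
  ext i j; fin_cases i <;> fin_cases j <;> simp [R, one_apply]

lemma R_add (β γ : ℝ) : R (β + γ) = R β * R γ := by
  ext i j
  fin_cases i <;> fin_cases j <;>
    simp [R, mul_apply, Fin.sum_univ_two, Real.cos_add, Real.sin_add] <;> ring

lemma Commute.R_right {U : Matrix (Fin 2) (Fin 2) ℂ} (hU : Commute U _root_.J) (β : ℝ) :
    Commute U (R β) := by
  rw [R_eq_cos_smul_one_add_sin_smul_J]
  exact ((Commute.one_right U).smul_right _).add_right (hU.smul_right _)

lemma mul_R_of_mul_J_eq_neg {V : Matrix (Fin 2) (Fin 2) ℂ} (hV : V * _root_.J = -(_root_.J * V))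
    (β : ℝ) : V * R β = R (-β) * V := by
  simp only [R_eq_cos_smul_one_add_sin_smul_J, mul_add, add_mul, mul_smul_comm, smul_mul_assoc,
    mul_one, one_mul, hV, Real.cos_neg, Real.sin_neg, Complex.ofReal_neg, neg_smul, smul_neg,
    neg_mul]

lemma R_neg_mul_add_mul_R {U V : Matrix (Fin 2) (Fin 2) ℂ} (hU : Commute U _root_.J)
    (hV : V * _root_.J = -(_root_.J * V)) (α : ℝ) :
    R (-α) * (U + V) * R α = U + V * R (2 * α) := by
  have hRU : R (-α) * U * R α = U := by
    rw [mul_assoc, (hU.R_right α).eq, ← mul_assoc, ← R_add, neg_add_cancel, R_zero, one_mul]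
  have hRV : R (-α) * V * R α = V * R (2 * α) := by
    rw [← mul_R_of_mul_J_eq_neg hV, mul_assoc, ← R_add, two_mul]
  rw [mul_add, add_mul, hRU, hRV]

lemma sum_range_cexp_two_pi_mul_div_mul_I {M : ℕ} (hM : 1 < M) :
    ∑ l ∈ Finset.range M, Complex.exp ((2 * Real.pi * l / M : ℝ) * Complex.I) = 0 := by
  rw [← (Complex.isPrimitiveRoot_exp M (by omega)).geom_sum_eq_zero hM]
  refine Finset.sum_congr rfl fun l _ => ?_
  rw [← Complex.exp_nat_mul]
  congr 1
  push_cast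
  field_simp

lemma sum_range_R_two_pi_mul_div {M : ℕ} (hM : 1 < M) :
    ∑ l ∈ Finset.range M, R (2 * Real.pi * l / M) = 0 := by
  have h := sum_range_cexp_two_pi_mul_div_mul_I hM
  have hcos : ∑ l ∈ Finset.range M, Real.cos (2 * Real.pi * l / M) = 0 := by
    simpa only [Complex.re_sum, Complex.exp_ofReal_mul_I_re, Complex.zero_re]
      using congrArg Complex.re h
  have hsin : ∑ l ∈ Finset.range M, Real.sin (2 * Real.pi * l / M) = 0 := by
    simpa only [Complex.im_sum, Complex.exp_ofReal_mul_I_im, Complex.zero_im]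
      using congrArg Complex.im h
  simp only [R_eq_cos_smul_one_add_sin_smul_J, Finset.sum_add_distrib, ← Finset.sum_smul,
    ← Complex.ofReal_sum, hcos, hsin, Complex.ofReal_zero, zero_smul, add_zero]

lemma Finset.sum_add_mul_mul_star_add_mul {R ι : Type*} [Ring R] [StarRing R] {s : Finset ι}
    (A B P : R) {G : ι → R} (hG : ∑ i ∈ s, G i = 0) :
    ∑ i ∈ s, (A + B * G i) * P * star (A + B * G i)
      = s.card • (A * P * star A) + B * (∑ i ∈ s, G i * P * star (G i)) * star B := by
  have expand : ∀ i, (A + B * G i) * P * star (A + B * G i)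
      = A * P * star A + A * P * star (G i) * star B + B * G i * (P * star A)
        + B * (G i * P * star (G i)) * star B := by
    intro i
    simp only [star_add, star_mul]
    noncomm_ring
  simp only [expand, Finset.sum_add_distrib, Finset.sum_const, ← Finset.sum_mul,
    ← Finset.mul_sum, ← star_sum, hG, star_zero, mul_zero, zero_mul, add_zero]

def oneKroneckerStarAlgHom (m n α : Type*) [Fintype m] [DecidableEq m] [Fintype n]
    [DecidableEq n] [CommSemiring α] [StarRing α] :
    Matrix n n α →⋆ₐ[α] Matrix (m × n) (m × n) α where
  toFun X := (1 : Matrix m m α) ⊗ₖ X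
  map_one' := one_kronecker_one
  map_mul' X Y := by rw [← mul_kronecker_mul, one_mul]
  map_zero' := kronecker_zero _
  map_add' := kronecker_add _
  commutes' r := by
    simp only [Algebra.algebraMap_eq_smul_one, kronecker_smul, one_kronecker_one]
  map_star' X := by
    simp only [star_eq_conjTranspose, conjTranspose_kronecker, conjTranspose_one]

section FilteredAverage

variable {A : Type*} [Ring A] [StarRing A] [Algebra ℂ A]
  (φ : Matrix (Fin 2) (Fin 2) ℂ →⋆ₐ[ℂ] A)

lemma smul_sum_map_conj_filtered_eq {M : ℕ} (hM : 1 < M) (F U V : Matrix (Fin 2) (Fin 2) ℂ)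
    (hU : Commute U _root_.J) (hV : V * _root_.J = -(_root_.J * V)) (P : A) :
    (1 / (M : ℂ)) • ∑ l ∈ Finset.range M,
        φ (F * R (-((l : ℝ) * Real.pi / M)) * (U + V) * R ((l : ℝ) * Real.pi / M)) * P *
          star (φ (F * R (-((l : ℝ) * Real.pi / M)) * (U + V) * R ((l : ℝ) * Real.pi / M)))
      = φ F * (φ U * P * star (φ U) +
          φ V * ((1 / (M : ℂ)) • ∑ l ∈ Finset.range M,
            φ (R (2 * Real.pi * l / M)) * P * star (φ (R (2 * Real.pi * l / M)))) *
            star (φ V)) * star (φ F) := by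
  have hM0 : (M : ℂ) ≠ 0 := Nat.cast_ne_zero.mpr (by omega)
  have hconj : ∀ l : ℕ,
      φ (F * R (-((l : ℝ) * Real.pi / M)) * (U + V) * R ((l : ℝ) * Real.pi / M))
        = φ (F * U) + φ (F * V) * φ (R (2 * Real.pi * l / M)) := by
    intro l
    rw [mul_assoc, mul_assoc, ← mul_assoc _ (U + V), R_neg_mul_add_mul_R hU hV, ← map_mul,
      ← map_add, mul_add, ← mul_assoc]
    congr 4
    ring
  have hsum : ∑ l ∈ Finset.range M, φ (R (2 * Real.pi * l / M)) = 0 := by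
    rw [← map_sum, sum_range_R_two_pi_mul_div hM, map_zero]
  simp only [hconj]
  rw [Finset.sum_add_mul_mul_star_add_mul _ _ P hsum, Finset.card_range]
  simp only [← Nat.cast_smul_eq_nsmul ℂ, smul_add, smul_smul, one_div, inv_mul_cancel₀ hM0,
    one_smul, map_mul, star_mul, mul_add, add_mul, mul_smul_comm, smul_mul_assoc, mul_assoc]

end FilteredAverage

theorem symmetrized_filtered_density_operator
    {ι : Type*} [Fintype ι] (M : ℕ) (hM : 2 ≤ M) (θ : ℝ)
    (U V : ι → Matrix (Fin 2) (Fin 2) ℂ)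
    (hU : ∀ j, U j * _root_.J = _root_.J * U j) (hV : ∀ j, V j * _root_.J = -(_root_.J * V j)) :
    (1 / (M : ℂ)) • ∑ j : ι, ∑ l ∈ Finset.range M,
        ((1 : Matrix (Fin 2) (Fin 2) ℂ) ⊗ₖ
            (F0 θ * R (-((l : ℝ) * Real.pi / (M : ℝ))) * (U j + V j) *
              R ((l : ℝ) * Real.pi / (M : ℝ)))) * P0 θ *
          ((1 : Matrix (Fin 2) (Fin 2) ℂ) ⊗ₖ
              (F0 θ * R (-((l : ℝ) * Real.pi / (M : ℝ))) * (U j + V j) *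
                R ((l : ℝ) * Real.pi / (M : ℝ))))ᴴ
      = ((1 : Matrix (Fin 2) (Fin 2) ℂ) ⊗ₖ F0 θ) *
          (∑ j : ι,
            (((1 : Matrix (Fin 2) (Fin 2) ℂ) ⊗ₖ U j) * P0 θ *
                ((1 : Matrix (Fin 2) (Fin 2) ℂ) ⊗ₖ U j)ᴴ +
              ((1 : Matrix (Fin 2) (Fin 2) ℂ) ⊗ₖ V j) * Phi θ M *
                ((1 : Matrix (Fin 2) (Fin 2) ℂ) ⊗ₖ V j)ᴴ)) *
          ((1 : Matrix (Fin 2) (Fin 2) ℂ) ⊗ₖ F0 θ)ᴴ := by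
  rw [Finset.smul_sum, Finset.mul_sum, Finset.sum_mul]
  refine Finset.sum_congr rfl fun j _ => ?_
  exact smul_sum_map_conj_filtered_eq (oneKroneckerStarAlgHom (Fin 2) (Fin 2) ℂ) (by omega)
    (F0 θ) (U j) (V j) (hU j) (hV j) (P0 θ)
end

section
/- (Bit–phase error relation for M > 2.) Let θ be a real number and let (a_i^j, a_x^j, a_y^j, a_z^j)_{j∈S} be a finite family of quadruples of complex numbers. Define N' := ∑_{j∈S} [2|a_i^j|² sin²θ + |a_x^j|² + (1+cos²θ)|a_y^j|² + |a_z^j|²] and assume N' > 0. Define p_x := (1/N')·∑_j sin²θ·(|a_x^j|² + |a_z^j|²), p_y := (1/N')·∑_j (2|a_y^j|² + cos²θ·(|a_x^j|² + |a_z^j|²)), p_z := (1/N')·∑_j (|a_x^j|² + |a_z^j|² + 2cos²θ·|a_y^j|²), and set the bit error rate e_b := p_x + p_y and the phase error rate e_p := p_y + p_z. Then e_p = (1 + cos²θ)·e_b. -/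
/-! Writing `a = |a_x|² + |a_z|²` and `y = |a_y|²`, every summand of `e_b · N'` is
`sin²θ a + 2y + cos²θ a = a + 2y`, while every summand of `e_p · N'` is `(1 + cos²θ)(a + 2y)`. -/

lemma phase_error_summand_eq {s c a y : ℝ} (h : s ^ 2 + c ^ 2 = 1) :
    (2 * y + c ^ 2 * a) + (a + 2 * c ^ 2 * y) =
      (1 + c ^ 2) * (s ^ 2 * a + (2 * y + c ^ 2 * a)) := by
  linear_combination (-(1 + c ^ 2) * a) * h

theorem bit_phase_error_relation_M_gt_two_general
    {ι : Type*} [Fintype ι] (θ : ℝ) (ax ay az : ι → ℂ)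
    (N' : ℝ)
    (px py pz eb ep : ℝ)
    (hpx : px = (1 / N') * ∑ j : ι,
      Real.sin θ ^ 2 * (‖ax j‖ ^ 2 + ‖az j‖ ^ 2))
    (hpy : py = (1 / N') * ∑ j : ι,
      (2 * ‖ay j‖ ^ 2 +
        Real.cos θ ^ 2 * (‖ax j‖ ^ 2 + ‖az j‖ ^ 2)))
    (hpz : pz = (1 / N') * ∑ j : ι,
      (‖ax j‖ ^ 2 + ‖az j‖ ^ 2 +
        2 * Real.cos θ ^ 2 * ‖ay j‖ ^ 2))
    (heb : eb = px + py) (hep : ep = py + pz) :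
    ep = (1 + Real.cos θ ^ 2) * eb := by
  subst heb hep hpx hpy hpz
  rw [← mul_add, ← mul_add, ← Finset.sum_add_distrib, ← Finset.sum_add_distrib,
    mul_left_comm]
  congr 1
  rw [Finset.mul_sum]
  exact Finset.sum_congr rfl fun j _ => phase_error_summand_eq (Real.sin_sq_add_cos_sq θ)

theorem bit_phase_error_relation_M_gt_two
    {ι : Type*} [Fintype ι] (θ : ℝ) (ai ax ay az : ι → ℂ)
    (N' : ℝ)
    (hN'def : N' = ∑ j : ι,
      (2 * ‖ai j‖ ^ 2 * Real.sin θ ^ 2 + ‖ax j‖ ^ 2 +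
        (1 + Real.cos θ ^ 2) * ‖ay j‖ ^ 2 + ‖az j‖ ^ 2))
    (hN' : 0 < N')
    (px py pz eb ep : ℝ)
    (hpx : px = (1 / N') * ∑ j : ι,
      Real.sin θ ^ 2 * (‖ax j‖ ^ 2 + ‖az j‖ ^ 2))
    (hpy : py = (1 / N') * ∑ j : ι,
      (2 * ‖ay j‖ ^ 2 +
        Real.cos θ ^ 2 * (‖ax j‖ ^ 2 + ‖az j‖ ^ 2)))
    (hpz : pz = (1 / N') * ∑ j : ι,
      (‖ax j‖ ^ 2 + ‖az j‖ ^ 2 +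
        2 * Real.cos θ ^ 2 * ‖ay j‖ ^ 2))
    (heb : eb = px + py) (hep : ep = py + pz) :
    ep = (1 + Real.cos θ ^ 2) * eb :=
  bit_phase_error_relation_M_gt_two_general θ ax ay az N' px py pz eb ep hpx hpy hpz heb hep
end

section
/- (Bit–phase error bound for M = 2.) Let θ be a real number with cos θ ≠ 0, and let (a_i^j, a_x^j, a_y^j, a_z^j)_{j∈S} be a finite family of quadruples of complex numbers. Define N'' := ∑_{j∈S} [sin²θ·(|a_i^j|² + |a_x^j|²) + (1+cos²θ)·(|a_y^j|² + |a_z^j|²)] and assume N'' > 0. Define the bit error rate e_b := (1/N'')·∑_j (|a_x^j|² sin²θ + |a_y^j|² + |a_z^j|² cos²θ) and the phase error rate e_p := (1/N'')·∑_j (|a_y^j|² + |a_z^j|²)·(1 + cos²θ). Then e_p ≤ ((1 + cos²θ)/cos²θ)·e_b. -/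
/-! Termwise, `cos²θ (|a_y|² + |a_z|²) ≤ |a_x|² sin²θ + |a_y|² + |a_z|² cos²θ`, because
`cos²θ ≤ 1` and every term is nonnegative; summing over `j` and multiplying by
`(1 + cos²θ) / N''` gives `cos²θ · e_p ≤ (1 + cos²θ) · e_b`. -/

lemma mul_add_le_add_add_mul {c s x y z : ℝ} (hc : c ≤ 1) (hs : 0 ≤ s) (hx : 0 ≤ x)
    (hy : 0 ≤ y) : c * (y + z) ≤ x * s + y + z * c := by
  nlinarith [mul_nonneg hx hs, mul_nonneg hy (sub_nonneg.2 hc)]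

lemma mul_sum_add_le_sum_add_add_mul {ι : Type*} (t : Finset ι) {c s : ℝ} (hc : c ≤ 1)
    (hs : 0 ≤ s) {x y z : ι → ℝ} (hx : ∀ j ∈ t, 0 ≤ x j) (hy : ∀ j ∈ t, 0 ≤ y j) :
    c * ∑ j ∈ t, (y j + z j) ≤ ∑ j ∈ t, (x j * s + y j + z j * c) := by
  rw [Finset.mul_sum]
  exact Finset.sum_le_sum fun j hj => mul_add_le_add_add_mul hc hs (hx j hj) (hy j hj)

theorem bit_phase_error_bound_M_eq_two_general
    {ι : Type*} [Fintype ι] (θ : ℝ) (hcos : Real.cos θ ≠ 0)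
    (ax ay az : ι → ℂ)
    (N'' : ℝ)
    (hN : 0 < N'')
    (eb ep : ℝ)
    (heb : eb = (1 / N'') * ∑ j : ι,
      (‖ax j‖ ^ 2 * Real.sin θ ^ 2 + ‖ay j‖ ^ 2 +
        ‖az j‖ ^ 2 * Real.cos θ ^ 2))
    (hep : ep = (1 / N'') * ∑ j : ι,
      (‖ay j‖ ^ 2 + ‖az j‖ ^ 2) * (1 + Real.cos θ ^ 2)) :
    ep ≤ ((1 + Real.cos θ ^ 2) / Real.cos θ ^ 2) * eb := by
  have hc : 0 < Real.cos θ ^ 2 := by positivity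
  have hsum := mul_sum_add_le_sum_add_add_mul Finset.univ (Real.cos_sq_le_one θ)
    (sq_nonneg (Real.sin θ)) (x := fun j => ‖ax j‖ ^ 2) (y := fun j => ‖ay j‖ ^ 2)
    (z := fun j => ‖az j‖ ^ 2) (fun j _ => sq_nonneg _) (fun j _ => sq_nonneg _)
  rw [div_mul_eq_mul_div, le_div_iff₀ hc, hep, heb, ← Finset.sum_mul]
  calc _ = (1 + Real.cos θ ^ 2) / N'' *
          (Real.cos θ ^ 2 * ∑ j, (‖ay j‖ ^ 2 + ‖az j‖ ^ 2)) := by ring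
    _ ≤ (1 + Real.cos θ ^ 2) / N'' *
          ∑ j, (‖ax j‖ ^ 2 * Real.sin θ ^ 2 + ‖ay j‖ ^ 2 + ‖az j‖ ^ 2 * Real.cos θ ^ 2) := by
        gcongr
    _ = _ := by ring

theorem bit_phase_error_bound_M_eq_two
    {ι : Type*} [Fintype ι] (θ : ℝ) (hcos : Real.cos θ ≠ 0)
    (ai ax ay az : ι → ℂ)
    (N'' : ℝ)
    (hNdef : N'' = ∑ j : ι,
      (Real.sin θ ^ 2 * (‖ai j‖ ^ 2 + ‖ax j‖ ^ 2) +
        (1 + Real.cos θ ^ 2) * (‖ay j‖ ^ 2 + ‖az j‖ ^ 2)))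
    (hN : 0 < N'')
    (eb ep : ℝ)
    (heb : eb = (1 / N'') * ∑ j : ι,
      (‖ax j‖ ^ 2 * Real.sin θ ^ 2 + ‖ay j‖ ^ 2 +
        ‖az j‖ ^ 2 * Real.cos θ ^ 2))
    (hep : ep = (1 / N'') * ∑ j : ι,
      (‖ay j‖ ^ 2 + ‖az j‖ ^ 2) * (1 + Real.cos θ ^ 2)) :
    ep ≤ ((1 + Real.cos θ ^ 2) / Real.cos θ ^ 2) * eb :=
  bit_phase_error_bound_M_eq_two_general θ hcos ax ay az N'' hN eb ep heb hep
end

section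
/- (Admissible range of the bit–phase correlation parameter for M > 2.) Let θ be a real number and let (a_i^j, a_x^j, a_y^j, a_z^j)_{j∈S} be a finite family of quadruples of complex numbers with N' := ∑_{j∈S} [2|a_i^j|² sin²θ + |a_x^j|² + (1+cos²θ)|a_y^j|² + |a_z^j|²] > 0. Define p_x := (1/N')·∑_j sin²θ·(|a_x^j|² + |a_z^j|²) and p_y := (1/N')·∑_j (2|a_y^j|² + cos²θ·(|a_x^j|² + |a_z^j|²)), and set e_b := p_x + p_y and λ := p_y. Then e_b·cos²θ ≤ λ ≤ e_b. -/
/-!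
Both error probabilities are `1 / N'` times nonnegative totals: with `X = ∑ (|a_x|² + |a_z|²)`
and `Y = ∑ |a_y|²` one has `p_x ∝ sin²θ X` and `p_y ∝ 2Y + cos²θ X`. Hence `λ ≤ e_b` because
`p_x ≥ 0`, and `e_b cos²θ ≤ λ` reduces, via `sin²θ + cos²θ = 1`, to
`p_x cos²θ ≤ p_y sin²θ`, whose two sides differ by `2 sin²θ Y / N' ≥ 0`.
-/

theorem add_mul_le_of_mul_le_mul {p q s c : ℝ} (hsc : s + c = 1) (h : p * c ≤ q * s) :
    (p + q) * c ≤ q := by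
  linear_combination h + q * hsc

theorem bitPhase_mul_le_mul {k s c X Y : ℝ} (hk : 0 ≤ k) (hs : 0 ≤ s) (hY : 0 ≤ Y) :
    k * (s * X) * c ≤ k * (2 * Y + c * X) * s := by
  have : 0 ≤ k * s * Y := by positivity
  linear_combination 2 * this

theorem admissible_range_correlation_parameter_general
    {ι : Type*} [Fintype ι] (θ : ℝ) (ax ay az : ι → ℂ)
    (N' : ℝ)
    (hN' : 0 < N')
    (px py eb lam : ℝ)
    (hpx : px = (1 / N') * ∑ j : ι,
      Real.sin θ ^ 2 * (‖ax j‖ ^ 2 + ‖az j‖ ^ 2))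
    (hpy : py = (1 / N') * ∑ j : ι,
      (2 * ‖ay j‖ ^ 2 +
        Real.cos θ ^ 2 * (‖ax j‖ ^ 2 + ‖az j‖ ^ 2)))
    (heb : eb = px + py) (hlam : lam = py) :
    eb * Real.cos θ ^ 2 ≤ lam ∧ lam ≤ eb := by
  subst heb hlam
  have hpx_nonneg : 0 ≤ px := by rw [hpx]; positivity
  refine ⟨add_mul_le_of_mul_le_mul (Real.sin_sq_add_cos_sq θ) ?_, by linarith⟩
  rw [hpx, hpy, Finset.sum_add_distrib, ← Finset.mul_sum, ← Finset.mul_sum, ← Finset.mul_sum]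
  exact bitPhase_mul_le_mul (by positivity) (by positivity) (by positivity)

theorem admissible_range_correlation_parameter
    {ι : Type*} [Fintype ι] (θ : ℝ) (ai ax ay az : ι → ℂ)
    (N' : ℝ)
    (hN'def : N' = ∑ j : ι,
      (2 * ‖ai j‖ ^ 2 * Real.sin θ ^ 2 + ‖ax j‖ ^ 2 +
        (1 + Real.cos θ ^ 2) * ‖ay j‖ ^ 2 + ‖az j‖ ^ 2))
    (hN' : 0 < N')
    (px py eb lam : ℝ)
    (hpx : px = (1 / N') * ∑ j : ι,
      Real.sin θ ^ 2 * (‖ax j‖ ^ 2 + ‖az j‖ ^ 2))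
    (hpy : py = (1 / N') * ∑ j : ι,
      (2 * ‖ay j‖ ^ 2 +
        Real.cos θ ^ 2 * (‖ax j‖ ^ 2 + ‖az j‖ ^ 2)))
    (heb : eb = px + py) (hlam : lam = py) :
    eb * Real.cos θ ^ 2 ≤ lam ∧ lam ≤ eb :=
  admissible_range_correlation_parameter_general θ ax ay az N' hN' px py eb lam hpx hpy heb hlam
end
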